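/- Let π : (X,T) → (Y,T) be an almost one-to-one factor map between minimal systems. For all nonempty open U₁,…,U_d ⊆ X and all polynomial tuples p ∈ ℤ[x]^d, R_p(U₁,…,U_d) = R_p((πU₁)°, …, (πU_d)°). -/

import Mathlib

/-- The return-time set `R_p(U₁,…,U_d)` along a polynomial tuple. -/
def returnTimes {α : Type*} (T : Equiv.Perm α) {d : ℕ} (p : Fin d → Polynomial ℤ)
    (U : Fin d → Set α) : Set ℤ :=
  {n : ℤ | ∃ x : α, ∀ i : Fin d, (T ^ (p i).eval n) x ∈ U i}

/-- A system `(α, T)` is minimal if every (two-sided) orbit is dense. -/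
def IsMinimalSystem {α : Type*} [TopologicalSpace α] (T : Equiv.Perm α) : Prop :=
  ∀ x : α, Dense (Set.range fun n : ℤ => (T ^ n) x)

/-!
At a point `x` whose fibre is `{x}`, `x ∈ U ↔ π x ∈ (π U)°`: one direction is trivial, and for
the other the open set `(π Uᶜ)ᶜ` lies in `π U` and contains `π x`. So `π ⁻¹' (π Uᵢ)°` agrees
with `Uᵢ` on the residual set of such points, and equivariance turns the return times of the
`(π Uᵢ)°` under `S` into those of the `π ⁻¹' (π Uᵢ)°` under `T`. The return-time condition
defines open sets, and a residual set meets every nonempty open set (Baire), so open sets that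
agree on a residual set have the same return times.
-/

open Filter Function Set Topology

def Homeomorph.toPermHom (α : Type*) [TopologicalSpace α] : (α ≃ₜ α) →* Equiv.Perm α where
  toFun := Homeomorph.toEquiv
  map_one' := rfl
  map_mul' _ _ := rfl

theorem Homeomorph.toEquiv_zpow {α : Type*} [TopologicalSpace α] (Φ : α ≃ₜ α) (n : ℤ) :
    (Φ ^ n).toEquiv = Φ.toEquiv ^ n :=
  map_zpow (Homeomorph.toPermHom α) Φ n

theorem Function.Semiconj.perm_zpow {α β : Type*} {π : α → β} {T : Equiv.Perm α}
    {S : Equiv.Perm β} (h : Semiconj π T S) (n : ℤ) : Semiconj π ⇑(T ^ n) ⇑(S ^ n) := by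
  have hinv : Semiconj π ⇑T⁻¹ ⇑S⁻¹ := h.inverses_right T.apply_symm_apply S.symm_apply_apply
  induction n using Int.induction_on with
  | zero => exact Semiconj.id_right
  | succ k ih => rw [zpow_add_one, zpow_add_one]; exact ih.comp_right h
  | pred k ih => rw [zpow_sub_one, zpow_sub_one]; exact ih.comp_right hinv

theorem returnTimes_eq_returnTimes_preimage {α β : Type*} {T : Equiv.Perm α} {S : Equiv.Perm β}
    {π : α → β} (hπs : Surjective π) (hπe : Semiconj π T S) {d : ℕ}
    (p : Fin d → Polynomial ℤ) (V : Fin d → Set β) :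
    returnTimes S p V = returnTimes T p (fun i => π ⁻¹' V i) := by
  ext n
  simp only [returnTimes, mem_ofPred_eq, mem_preimage, (hπe.perm_zpow _).eq]
  exact hπs.exists

theorem returnTimes_congr_of_eventuallyEq_residual {α : Type*} [TopologicalSpace α]
    [BaireSpace α] (Φ : α ≃ₜ α) {d : ℕ} (p : Fin d → Polynomial ℤ) {U V : Fin d → Set α}
    (hU : ∀ i, IsOpen (U i)) (hV : ∀ i, IsOpen (V i)) (hUV : ∀ i, U i =ᶠ[residual α] V i) :
    returnTimes Φ.toEquiv p U = returnTimes Φ.toEquiv p V := by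
  suffices key : ∀ {U V : Fin d → Set α}, (∀ i, IsOpen (U i)) → (∀ i, U i =ᶠ[residual α] V i) →
      returnTimes Φ.toEquiv p U ⊆ returnTimes Φ.toEquiv p V from
    (key hU hUV).antisymm (key hV fun i => (hUV i).symm)
  intro U V hU hUV n ⟨x, hx⟩
  simp only [← Homeomorph.toEquiv_zpow, Homeomorph.coe_toEquiv] at hx
  have hopen : IsOpen {x | ∀ i, (Φ ^ (p i).eval n) x ∈ U i} := by
    simp only [ofPred_forall]
    exact isOpen_iInter_of_finite fun i => (hU i).preimage (Φ ^ (p i).eval n).continuous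
  have hgood : ∀ᶠ x in residual α, ∀ i, (Φ ^ (p i).eval n) x ∈ U i ↔ (Φ ^ (p i).eval n) x ∈ V i :=
    eventually_all.2 fun i => (tendsto_residual_of_isOpenMap (Φ ^ (p i).eval n).continuous
      (Φ ^ (p i).eval n).isOpenMap).eventually (eventuallyEq_set.1 (hUV i))
  obtain ⟨y, hyU, hyV⟩ := (dense_of_mem_residual hgood).inter_open_nonempty _ hopen ⟨x, hx⟩
  refine ⟨y, fun i => ?_⟩
  rw [← Homeomorph.toEquiv_zpow]
  exact (hyV i).1 (hyU i)

theorem IsOpen.mem_interior_image_iff {α β : Type*} [TopologicalSpace α] [CompactSpace α]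
    [TopologicalSpace β] [T2Space β] {π : α → β} (hπc : Continuous π) (hπs : Surjective π)
    {U : Set α} (hU : IsOpen U) {x : α} (hx : π ⁻¹' {π x} = {x}) :
    π x ∈ interior (π '' U) ↔ x ∈ U := by
  have fiber : ∀ {u}, π u = π x → u = x := fun h => (hx ▸ h : _ ∈ ({x} : Set α))
  constructor
  · rintro hxU
    obtain ⟨u, hu, hux⟩ := interior_subset hxU
    exact fiber hux ▸ hu
  · intro hxU
    -- points all of whose preimages lie in `U`
    have hopen : IsOpen (π '' Uᶜ)ᶜ :=
      ((hU.isClosed_compl.isCompact.image hπc).isClosed).isOpen_compl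
    refine interior_maximal ?_ hopen ?_
    · intro y hy
      obtain ⟨w, rfl⟩ := hπs y
      by_contra hw
      exact hy ⟨w, fun hwU => hw ⟨w, hwU, rfl⟩, rfl⟩
    · rintro ⟨u, huU, hux⟩
      exact huU (fiber hux ▸ hxU)

theorem stmt_7_general {α β : Type*} [MetricSpace α] [CompactSpace α]
    [MetricSpace β]
    (T : Equiv.Perm α) (hT : Continuous T) (hT' : Continuous T.symm)
    (S : Equiv.Perm β)
    (π : α → β) (hπc : Continuous π) (hπs : Function.Surjective π)
    (hπe : π ∘ T = S ∘ π)
    -- `π` is almost 1–1: on a residual set the fibers are singletons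
    (h11 : ∃ Ω : Set α, Dense Ω ∧ IsGδ Ω ∧ ∀ x ∈ Ω, π ⁻¹' {π x} = {x})
    {d : ℕ} (U : Fin d → Set α)
    (hUop : ∀ i, IsOpen (U i))
    (p : Fin d → Polynomial ℤ) :
    returnTimes T p U = returnTimes S p (fun i => interior (π '' U i)) := by
  obtain ⟨Ω, hΩd, hΩg, hΩ⟩ := h11
  let Φ : α ≃ₜ α := ⟨T, hT, hT'⟩
  rw [returnTimes_eq_returnTimes_preimage hπs (semiconj_iff_comp_eq.2 hπe)]
  refine returnTimes_congr_of_eventuallyEq_residual Φ p hUop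
    (fun i => isOpen_interior.preimage hπc) fun i => eventuallyEq_set.2 ?_
  filter_upwards [residual_of_dense_Gδ hΩg hΩd] with x hx
  exact ((hUop i).mem_interior_image_iff hπc hπs (hΩ x hx)).symm

theorem stmt_7 {α β : Type*} [MetricSpace α] [CompactSpace α]
    [MetricSpace β] [CompactSpace β]
    (T : Equiv.Perm α) (hT : Continuous T) (hT' : Continuous T.symm)
    (S : Equiv.Perm β) (hS : Continuous S) (hS' : Continuous S.symm)
    (hmT : IsMinimalSystem T) (hmS : IsMinimalSystem S)
    (π : α → β) (hπc : Continuous π) (hπs : Function.Surjective π)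
    (hπe : π ∘ T = S ∘ π)
    -- `π` is almost 1–1: on a residual set the fibers are singletons
    (h11 : ∃ Ω : Set α, Dense Ω ∧ IsGδ Ω ∧ ∀ x ∈ Ω, π ⁻¹' {π x} = {x})
    {d : ℕ} (U : Fin d → Set α)
    (hUne : ∀ i, (U i).Nonempty) (hUop : ∀ i, IsOpen (U i))
    (p : Fin d → Polynomial ℤ) :
    returnTimes T p U = returnTimes S p (fun i => interior (π '' U i)) :=
  stmt_7_general T hT hT' S π hπc hπs hπe h11 U hUop p
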